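/- Let u ≥ 3 be an integer and let [n]_{p,q} = Σ_{i=0}^{n−1} p^{n−1−i} q^i. Let J^{(u)} be the infinite tridiagonal matrix with first diagonal entry [u]_{p,q} and all other diagonal entries p+q, with all superdiagonal entries equal to 1, with first subdiagonal entry pq·[u−1]_{p,q} and all subsequent subdiagonal entries pq. Then J^{(u)} is (p,q)-totally positive: every minor of J^{(u)} is a polynomial in p and q with nonnegative coefficients. -/

import Mathlib

/-- A multivariable real polynomial is nonnegative if all of its coefficients
are nonnegative. -/
def PolyNonneg {m : ℕ} (f : MvPolynomial (Fin m) ℝ) : Prop :=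
  ∀ d : Fin m →₀ ℕ, 0 ≤ f.coeff d

/-- An infinite matrix of multivariable real polynomials is totally positive if
every minor has all nonnegative coefficients. -/
def xTP {m : ℕ} (M : ℕ → ℕ → MvPolynomial (Fin m) ℝ) : Prop :=
  ∀ (k : ℕ) (r c : Fin k → ℕ), StrictMono r → StrictMono c →
    PolyNonneg (Matrix.det (Matrix.of fun i j => M (r i) (c j)))

/-- The variable `p` in `ℝ[p,q]`. -/
noncomputable def P : MvPolynomial (Fin 2) ℝ := MvPolynomial.X 0

/-- The variable `q` in `ℝ[p,q]`. -/
noncomputable def Q : MvPolynomial (Fin 2) ℝ := MvPolynomial.X 1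

/-- The `(p,q)`-integer `[n]_{p,q} = p^{n-1} + p^{n-2}q + ⋯ + q^{n-1}
  = Σ_{i=0}^{n-1} p^{n-1-i} q^i`. -/
noncomputable def pqInt (n : ℕ) : MvPolynomial (Fin 2) ℝ :=
  ∑ i ∈ Finset.range n, P ^ (n - 1 - i) * Q ^ i

/-- The tridiagonal coefficient matrix `J⁽ᵘ⁾` of Example 3.4: diagonal
`([u]_{p,q}, p+q, p+q, …)`, superdiagonal `(1, 1, …)`, and subdiagonal
`(pq[u-1]_{p,q}, pq, pq, …)`. -/
noncomputable def Ju (u : ℕ) : ℕ → ℕ → MvPolynomial (Fin 2) ℝ := fun a b =>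
  if a = b then (if a = 0 then pqInt u else P + Q)
  else if b = a + 1 then 1
  else if a = b + 1 then (if b = 0 then P * Q * pqInt (u - 1) else P * Q)
  else 0

/-!
`J⁽ᵘ⁾ = U L` with `U` upper bidiagonal (diagonal `p^{u-1}, p, p, …`, superdiagonal `1`) and `L`
lower bidiagonal (diagonal `1`, subdiagonal `q[u-1]_{p,q}, q, q, …`); the only non-trivial entry
is the corner, where `[u]_{p,q} = p^{u-1} + q[u-1]_{p,q}`. Expanding every row of a minor of
`J⁽ᵘ⁾` by multilinearity writes it as a combination, with coefficients in the entries of `U`,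
of minors of `L` along weakly increasing rows. Such a minor either repeats a row, or, since the
band of `L` forces every surviving permutation to be monotone, equals the product of its
diagonal entries.
-/

open Finset MvPolynomial Matrix

def nonnegCoeffs (m : ℕ) : Subsemiring (MvPolynomial (Fin m) ℝ) where
  carrier := {f | PolyNonneg f}
  mul_mem' {f g} hf hg d := by
    rw [coeff_mul]
    exact sum_nonneg fun x _ => mul_nonneg (hf x.1) (hg x.2)
  one_mem' d := by
    rw [coeff_one]
    split_ifs <;> norm_num
  add_mem' hf hg d := by
    rw [coeff_add]
    exact add_nonneg (hf d) (hg d)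
  zero_mem' _ := le_rfl

theorem polyNonneg_X {m : ℕ} (i : Fin m) : PolyNonneg (X i : MvPolynomial (Fin m) ℝ) := by
  intro d
  rw [coeff_X]
  split_ifs <;> norm_num

theorem polyNonneg_pqInt (n : ℕ) : PolyNonneg (pqInt n) :=
  (nonnegCoeffs 2).sum_mem fun _ _ =>
    (nonnegCoeffs 2).mul_mem ((nonnegCoeffs 2).pow_mem (polyNonneg_X 0) _)
      ((nonnegCoeffs 2).pow_mem (polyNonneg_X 1) _)

theorem pqInt_succ (n : ℕ) : pqInt (n + 1) = P ^ n + Q * pqInt n := by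
  rw [pqInt, sum_range_succ', pqInt, mul_sum, add_comm]
  congr 1
  · simp
  · refine sum_congr rfl fun i _ => ?_
    rw [show n + 1 - 1 - (i + 1) = n - 1 - i by omega, pow_succ]
    ring

section CommRing

variable {R : Type*} [CommRing R]

def IsLowerBidiagonal (L : ℕ → ℕ → R) : Prop :=
  ∀ a b, L a b ≠ 0 → a = b ∨ a = b + 1

theorem IsLowerBidiagonal.det_submatrix {L : ℕ → ℕ → R} (hL : IsLowerBidiagonal L) {k : ℕ}
    {x c : Fin k → ℕ} (hx : StrictMono x) (hc : StrictMono c) :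
    det (of fun i j => L (x i) (c j)) = ∏ i, L (x i) (c i) := by
  rw [det_apply', sum_eq_single 1 ?_ (by simp)]
  · simp
  intro σ _ hσ
  suffices ∃ i, L (x (σ i)) (c i) = 0 by
    obtain ⟨i, hi⟩ := this
    exact mul_eq_zero_of_right _ (prod_eq_zero (mem_univ i) hi)
  by_contra! hne
  have hband (i : Fin k) : c i ≤ x (σ i) ∧ x (σ i) ≤ c i + 1 := by
    rcases hL _ _ (hne i) with h | h <;> omega
  have hmono : Monotone σ := fun i j hij => by
    obtain hij | rfl := hij.lt_or_eq
    · refine hx.le_iff_le.1 ?_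
      calc x (σ i) ≤ c i + 1 := (hband i).2
        _ ≤ c j := hc hij
        _ ≤ x (σ j) := (hband j).1
    · rfl
  exact hσ (Equiv.ext fun _ => (hmono.strictMono_of_injective σ.injective).apply_eq)

theorem det_of_sum_mul {n E : Type*} [Fintype n] [DecidableEq n] [Fintype E]
    (w : n → E → R) (A : n → E → n → R) :
    det (of fun i j => ∑ e, w i e * A i e j)
      = ∑ g : n → E, (∏ i, w i (g i)) * det (of fun i j => A i (g i) j) := by
  have hrows : of (fun i j => ∑ e, w i e * A i e j) = fun i => ∑ e, w i e • A i e := by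
    ext i j
    simp [Finset.sum_apply]
  rw [hrows]
  refine (detRowAlternating.toMultilinearMap.map_sum _).trans (sum_congr rfl fun g _ => ?_)
  rw [← det_mul_column]
  rfl

end CommRing

theorem IsLowerBidiagonal.polyNonneg_det {m : ℕ} {L : ℕ → ℕ → MvPolynomial (Fin m) ℝ}
    (hL : IsLowerBidiagonal L) (hL₀ : ∀ a b, PolyNonneg (L a b)) {k : ℕ} {x c : Fin k → ℕ}
    (hx : Monotone x) (hc : StrictMono c) : PolyNonneg (det (of fun i j => L (x i) (c j))) := by
  by_cases hinj : Function.Injective x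
  · rw [hL.det_submatrix (hx.strictMono_of_injective hinj) hc]
    exact (nonnegCoeffs m).prod_mem fun i _ => hL₀ _ _
  · obtain ⟨i, j, hij, hne⟩ := Function.not_injective_iff.1 hinj
    rw [det_zero_of_row_eq hne (by ext; simp [hij])]
    exact (nonnegCoeffs m).zero_mem

theorem xTP_of_eq_sum_mul_lowerBidiagonal {m : ℕ} {M L : ℕ → ℕ → MvPolynomial (Fin m) ℝ}
    (w : ℕ → Fin 2 → MvPolynomial (Fin m) ℝ) (hM : ∀ a b, M a b = ∑ e, w a e * L (a + e) b)
    (hw : ∀ a e, PolyNonneg (w a e)) (hL : IsLowerBidiagonal L)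
    (hL₀ : ∀ a b, PolyNonneg (L a b)) : xTP M := by
  intro k r c hr hc
  simp only [hM]
  rw [det_of_sum_mul (fun i e => w (r i) e) (fun i e j => L (r i + e) (c j))]
  refine (nonnegCoeffs m).sum_mem fun g _ => (nonnegCoeffs m).mul_mem
    ((nonnegCoeffs m).prod_mem fun i _ => hw _ _) (hL.polyNonneg_det hL₀ ?_ hc)
  intro i j hij
  obtain hij | rfl := hij.lt_or_eq
  · calc r i + g i ≤ r i + 1 := by have := (g i).isLt; omega
      _ ≤ r j := hr hij
      _ ≤ r j + g j := Nat.le_add_right _ _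
  · rfl

/-- Row `a` of the upper bidiagonal factor of `Ju u`: entry `e` sits in column `a + e`. -/
noncomputable def juUpper (u a : ℕ) : Fin 2 → MvPolynomial (Fin 2) ℝ :=
  ![if a = 0 then P ^ (u - 1) else P, 1]

noncomputable def juLower (u : ℕ) : ℕ → ℕ → MvPolynomial (Fin 2) ℝ := fun a b =>
  if a = b then 1
  else if a = b + 1 then (if b = 0 then Q * pqInt (u - 1) else Q)
  else 0

theorem isLowerBidiagonal_juLower (u : ℕ) : IsLowerBidiagonal (juLower u) := by
  intro a b h
  unfold juLower at h
  split_ifs at h <;> tauto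

theorem polyNonneg_juLower (u a b : ℕ) : PolyNonneg (juLower u a b) := by
  unfold juLower
  split_ifs
  exacts [(nonnegCoeffs 2).one_mem,
    (nonnegCoeffs 2).mul_mem (polyNonneg_X 1) (polyNonneg_pqInt _), polyNonneg_X 1,
    (nonnegCoeffs 2).zero_mem]

theorem polyNonneg_juUpper (u a : ℕ) (e : Fin 2) : PolyNonneg (juUpper u a e) := by
  fin_cases e
  · show PolyNonneg (if a = 0 then P ^ (u - 1) else P)
    split_ifs
    exacts [(nonnegCoeffs 2).pow_mem (polyNonneg_X 0) _, polyNonneg_X 0]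
  · exact (nonnegCoeffs 2).one_mem

theorem Ju_eq_sum_mul_juLower {u : ℕ} (hu : 1 ≤ u) (a b : ℕ) :
    Ju u a b = ∑ e : Fin 2, juUpper u a e * juLower u (a + e) b := by
  obtain ⟨v, rfl⟩ : ∃ v, u = v + 1 := ⟨u - 1, by omega⟩
  simp only [Fin.sum_univ_two, Fin.val_zero, Fin.val_one, cons_val_zero, cons_val_one,
    add_zero, one_mul, Nat.add_sub_cancel, Ju, juUpper, juLower, pqInt_succ]
  split_ifs <;> subst_vars <;> first | omega | ring

/-- In Example 3.4: for `u ≥ 3`, the tridiagonal coefficient matrix `J⁽ᵘ⁾` is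
`(p,q)`-totally positive. -/
theorem example34_Ju_xTP (u : ℕ) (hu : 3 ≤ u) : xTP (Ju u) :=
  xTP_of_eq_sum_mul_lowerBidiagonal (juUpper u) (Ju_eq_sum_mul_juLower (by omega))
    (polyNonneg_juUpper u) (isLowerBidiagonal_juLower u) (polyNonneg_juLower u)
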